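/- Let N ≥ 1 and let a : ℝ → ℂ^N be the ULA steering vector with entries a_m(φ) = exp(i·π·(N−1)·sin φ / 2) · exp(−i·m·π·sin φ) for m = 0,…,N−1. Then for every φ, the squared norm of the derivative satisfies ‖a'(φ)‖² = π² · cos²φ · (N³ − N) / 12. -/

import Mathlib

/-! The entry `m` of the steering vector is the unimodular phase `exp(i·π·((N−1)/2 − m)·sin φ)`,
so its derivative has squared modulus `π²·cos²φ·((N−1)/2 − m)²`; summing over `m`, the
centred second moment `∑ ((N−1)/2 − m)²` of `0, …, N−1` equals `(N³ − N)/12`. -/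

open Complex Real Matrix

/-- ULA steering vector with the array center as zero-phase reference:
`a_m(φ) = exp(i·π·(N−1)·sin φ / 2) · exp(−i·m·π·sin φ)` for `m = 0, …, N−1`. -/
noncomputable def steer (N : ℕ) (φ : ℝ) : Fin N → ℂ := fun m =>
  Complex.exp (Complex.I * (Real.pi : ℂ) * ((N : ℂ) - 1) * (Real.sin φ : ℂ) / 2) *
    Complex.exp (-(Complex.I * ((m : ℕ) : ℂ) * (Real.pi : ℂ) * (Real.sin φ : ℂ)))

open Finset

theorem Finset.sum_range_sub_sq {K : Type*} [Field K] [CharZero K] (c : K) (n : ℕ) :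
    ∑ m ∈ range n, (c - m) ^ 2 =
      n * c ^ 2 - c * n * (n - 1) + n * (n - 1) * (2 * n - 1) / 6 := by
  induction n with
  | zero => simp
  | succ n ih => rw [sum_range_succ, ih]; push_cast; ring

theorem Finset.sum_range_centered_sq {K : Type*} [Field K] [CharZero K] (n : ℕ) :
    ∑ m ∈ range n, (((n : K) - 1) / 2 - m) ^ 2 = ((n : K) ^ 3 - n) / 12 := by
  rw [sum_range_sub_sq]; ring

theorem Complex.normSq_deriv_exp_ofReal_mul_I {f : ℝ → ℝ} {x : ℝ} (hf : DifferentiableAt ℝ f x) :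
    normSq (deriv (fun t => exp (f t * I)) x) = deriv f x ^ 2 := by
  have hderiv := (hf.hasDerivAt.ofReal_comp.mul_const I).cexp
  rw [hderiv.deriv, normSq_mul, normSq_mul, normSq_I, normSq_ofReal,
    normSq_eq_norm_sq, norm_exp_ofReal_mul_I]
  ring

theorem steer_apply_eq_exp (N : ℕ) (φ : ℝ) (m : Fin N) :
    steer N φ m = exp (↑(π * (((N : ℝ) - 1) / 2 - m) * Real.sin φ) * I) := by
  rw [steer, ← Complex.exp_add]
  push_cast
  ring_nf

theorem normSq_deriv_steer (N : ℕ) (φ : ℝ) (m : Fin N) :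
    normSq (deriv (fun x => steer N x m) φ) =
      π ^ 2 * Real.cos φ ^ 2 * (((N : ℝ) - 1) / 2 - m) ^ 2 := by
  simp_rw [steer_apply_eq_exp]
  rw [normSq_deriv_exp_ofReal_mul_I (by fun_prop), deriv_const_mul _ (by fun_prop),
    Real.deriv_sin]
  ring

theorem steer_deriv_norm_sq_general (N : ℕ) (φ : ℝ) :
    (∑ m : Fin N, Complex.normSq (deriv (fun x => steer N x m) φ)) =
      Real.pi ^ 2 * Real.cos φ ^ 2 * ((N : ℝ) ^ 3 - (N : ℝ)) / 12 := by
  simp_rw [normSq_deriv_steer, ← mul_sum]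
  rw [Fin.sum_univ_eq_sum_range (fun m => (((N : ℝ) - 1) / 2 - m) ^ 2), sum_range_centered_sq]
  ring

/-- The squared norm of the componentwise derivative of the steering vector:
`‖a'(φ)‖² = π² · cos²φ · (N³ − N) / 12`. -/
theorem steer_deriv_norm_sq (N : ℕ) (hN : 1 ≤ N) (φ : ℝ) :
    (∑ m : Fin N, Complex.normSq (deriv (fun x => steer N x m) φ)) =
      Real.pi ^ 2 * Real.cos φ ^ 2 * ((N : ℝ) ^ 3 - (N : ℝ)) / 12 :=
  steer_deriv_norm_sq_general N φ
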